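/- Let g be a bounded holomorphic function on the unit disc D and let γ : [0,1) → D be a continuous curve with γ(t) → e^{iθ} as t → 1, approaching the boundary non-tangentially. If g(γ(t)) → L as t → 1, then g has non-tangential limit L at e^{iθ}. -/

import Mathlib

/-!
Fix `z` in a Stolz angle at `w = e^{iθ}` and put `s = ‖z - w‖`. By the intermediate value
theorem the curve passes through points `a₀, …, a_{N-1}` with `‖a_k - w‖ = s (1 + k / N)`. Since
they lie in a Stolz angle at distances from `w` comparable to `s`, these points are
pseudo-hyperbolically `1/(4N)`-separated, and each is at pseudo-hyperbolic distance at most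
`r = 1 - 1/(18 α α₀) < 1` from `z`. Dividing `f - f(a_k)` successively by the Blaschke factors at
the `a_k`, which by the maximum principle does not increase the supremum on the disc, shows that a
bounded holomorphic `f` with `‖f(a_k)‖ ≤ η` satisfies `‖f z‖ ≤ (2 + 8N)^N η + r^N sup ‖f‖`. Apply
this to `f = g - L`: choose `N` so that the second term is small, then `η` small, which is possible
far enough along the curve.
-/

open Metric Complex Filter ComplexConjugate Set Topology

noncomputable def blaschkeFactor (a z : ℂ) : ℂ := (z - a) / (1 - conj a * z)

def stolzAngle (w : ℂ) (α : ℝ) : Set ℂ :=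
  {ζ | ζ ∈ ball (0 : ℂ) 1 ∧ ‖ζ - w‖ < α * (1 - ‖ζ‖)}

section BlaschkeFactor

variable {a z : ℂ}

lemma norm_one_sub_conj_mul_sq_sub_norm_sub_sq (a z : ℂ) :
    ‖1 - conj a * z‖ ^ 2 - ‖z - a‖ ^ 2 = (1 - ‖a‖ ^ 2) * (1 - ‖z‖ ^ 2) := by
  simp only [Complex.sq_norm, Complex.normSq_apply, Complex.sub_re, Complex.sub_im,
    Complex.one_re, Complex.one_im, Complex.mul_re, Complex.mul_im, Complex.conj_re,
    Complex.conj_im]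
  ring

lemma one_sub_norm_le_norm_one_sub_conj_mul (hz : ‖z‖ ≤ 1) : 1 - ‖a‖ ≤ ‖1 - conj a * z‖ := by
  have hmul : ‖conj a * z‖ ≤ ‖a‖ := by
    rw [norm_mul, Complex.norm_conj]
    exact mul_le_of_le_one_right (norm_nonneg a) hz
  calc 1 - ‖a‖ ≤ ‖(1 : ℂ)‖ - ‖conj a * z‖ := by rw [norm_one]; linarith
    _ ≤ ‖1 - conj a * z‖ := norm_sub_norm_le _ _

lemma norm_one_sub_conj_mul_pos (ha : ‖a‖ < 1) (hz : ‖z‖ ≤ 1) : 0 < ‖1 - conj a * z‖ :=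
  (sub_pos.2 ha).trans_le (one_sub_norm_le_norm_one_sub_conj_mul hz)

lemma one_sub_norm_blaschkeFactor_sq (ha : ‖a‖ < 1) (hz : ‖z‖ ≤ 1) :
    1 - ‖blaschkeFactor a z‖ ^ 2 = (1 - ‖a‖ ^ 2) * (1 - ‖z‖ ^ 2) / ‖1 - conj a * z‖ ^ 2 := by
  have hd := (norm_one_sub_conj_mul_pos ha hz).ne'
  rw [← norm_one_sub_conj_mul_sq_sub_norm_sub_sq, blaschkeFactor, norm_div, div_pow, sub_div,
    div_self (pow_ne_zero 2 hd)]

lemma norm_blaschkeFactor_le_one (ha : ‖a‖ < 1) (hz : ‖z‖ ≤ 1) : ‖blaschkeFactor a z‖ ≤ 1 := by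
  have h := one_sub_norm_blaschkeFactor_sq ha hz
  have : 0 ≤ (1 - ‖a‖ ^ 2) * (1 - ‖z‖ ^ 2) / ‖1 - conj a * z‖ ^ 2 := by
    apply div_nonneg _ (sq_nonneg _)
    apply mul_nonneg <;> nlinarith [norm_nonneg a, norm_nonneg z]
  nlinarith [norm_nonneg (blaschkeFactor a z)]

lemma one_sub_norm_blaschkeFactor_sq_le (ha : ‖a‖ < 1) (hz : ‖z‖ ≤ 1) :
    1 - ‖blaschkeFactor a z‖ ^ 2 ≤ (1 + ‖a‖) / (1 - ‖a‖) * (1 - ‖z‖ ^ 2) := by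
  have ha' : 0 < 1 - ‖a‖ := sub_pos.2 ha
  have hz' : 0 ≤ 1 - ‖z‖ ^ 2 := by nlinarith [norm_nonneg z]
  rw [one_sub_norm_blaschkeFactor_sq ha hz]
  calc (1 - ‖a‖ ^ 2) * (1 - ‖z‖ ^ 2) / ‖1 - conj a * z‖ ^ 2
      ≤ (1 - ‖a‖ ^ 2) * (1 - ‖z‖ ^ 2) / (1 - ‖a‖) ^ 2 := by
        gcongr
        · exact mul_nonneg (by nlinarith [norm_nonneg a]) hz'
        · exact one_sub_norm_le_norm_one_sub_conj_mul hz
    _ = (1 + ‖a‖) / (1 - ‖a‖) * (1 - ‖z‖ ^ 2) := by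
        field_simp
        ring

lemma blaschkeFactor_mul_dslope (f : ℂ → ℂ) (hfa : f a = 0) (hz : 1 - conj a * z ≠ 0) :
    blaschkeFactor a z * ((1 - conj a * z) * dslope f a z) = f z := by
  rcases eq_or_ne z a with rfl | hne
  · simp [blaschkeFactor, hfa]
  · rw [dslope_of_ne f hne, slope_def_field, hfa, sub_zero, blaschkeFactor]
    rw [mul_comm] at hz
    field_simp [sub_ne_zero.2 hne]

end BlaschkeFactor

section Division

variable {a : ℂ} {B : ℝ}

lemma norm_le_of_norm_blaschkeFactor_mul_le {h : ℂ → ℂ} (hh : DifferentiableOn ℂ h (ball 0 1))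
    (ha : ‖a‖ < 1) (hB : ∀ ζ ∈ ball (0 : ℂ) 1, ‖blaschkeFactor a ζ * h ζ‖ ≤ B) {z : ℂ}
    (hz : z ∈ ball (0 : ℂ) 1) : ‖h z‖ ≤ B := by
  rw [mem_ball_zero_iff] at hz
  set c := (1 + ‖a‖) / (1 - ‖a‖)
  set m : ℝ → ℝ := fun ρ => 1 - c * (1 - ρ ^ 2)
  have hm : Continuous m := by fun_prop
  have hm1 : m 1 = 1 := by simp [m]
  have hsphere : ∀ ρ ∈ Ioo ‖z‖ 1, 0 < m ρ → ‖h z‖ * m ρ ≤ B := by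
    intro ρ hρ hmρ
    rw [← le_div_iff₀ hmρ]
    refine Complex.norm_le_of_forall_mem_frontier_norm_le isBounded_ball
      (hh.diffContOnCl_ball (closedBall_subset_ball hρ.2)) (fun ζ hζ => ?_)
      (subset_closure (mem_ball_zero_iff.2 hρ.1))
    rw [frontier_ball _ ((norm_nonneg z).trans_lt hρ.1).ne', mem_sphere_zero_iff_norm] at hζ
    have hζ1 : ‖ζ‖ ≤ 1 := hζ.le.trans hρ.2.le
    have hbl : m ρ ≤ ‖blaschkeFactor a ζ‖ := by
      have h1 := one_sub_norm_blaschkeFactor_sq_le ha hζ1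
      have h2 := norm_blaschkeFactor_le_one ha hζ1
      rw [hζ] at h1
      nlinarith [norm_nonneg (blaschkeFactor a ζ)]
    rw [le_div_iff₀ hmρ]
    calc ‖h ζ‖ * m ρ ≤ ‖h ζ‖ * ‖blaschkeFactor a ζ‖ := by gcongr
      _ ≤ B := by rw [mul_comm, ← norm_mul]; exact hB ζ (mem_ball_zero_iff.2 (hζ.trans_lt hρ.2))
  have hlim : Tendsto (fun ρ => ‖h z‖ * m ρ) (𝓝[<] 1) (𝓝 ‖h z‖) := by
    simpa [hm1] using ((hm.tendsto 1).const_mul ‖h z‖).mono_left nhdsWithin_le_nhds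
  refine le_of_tendsto hlim ?_
  filter_upwards [Ioo_mem_nhdsLT hz,
    ((hm.tendsto 1).mono_left nhdsWithin_le_nhds).eventually (lt_mem_nhds (hm1 ▸ one_pos))]
    with ρ hρ hmρ
  exact hsphere ρ hρ hmρ

lemma exists_eq_blaschkeFactor_mul {f : ℂ → ℂ} (hf : DifferentiableOn ℂ f (ball 0 1))
    (hB : ∀ ζ ∈ ball (0 : ℂ) 1, ‖f ζ‖ ≤ B) (ha : a ∈ ball (0 : ℂ) 1) (hfa : f a = 0) :
    ∃ h : ℂ → ℂ, DifferentiableOn ℂ h (ball 0 1) ∧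
      (∀ ζ ∈ ball (0 : ℂ) 1, f ζ = blaschkeFactor a ζ * h ζ) ∧ ∀ ζ ∈ ball (0 : ℂ) 1, ‖h ζ‖ ≤ B := by
  rw [mem_ball_zero_iff] at ha
  have hfac : ∀ ζ ∈ ball (0 : ℂ) 1,
      f ζ = blaschkeFactor a ζ * ((1 - conj a * ζ) * dslope f a ζ) := fun ζ hζ =>
    (blaschkeFactor_mul_dslope f hfa
      (norm_pos_iff.1 (norm_one_sub_conj_mul_pos ha (mem_ball_zero_iff.1 hζ).le))).symm
  have hd : DifferentiableOn ℂ (fun ζ => (1 - conj a * ζ) * dslope f a ζ) (ball 0 1) :=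
    (by fun_prop : Differentiable ℂ fun ζ => 1 - conj a * ζ).differentiableOn.mul
      ((Complex.differentiableOn_dslope (isOpen_ball.mem_nhds (mem_ball_zero_iff.2 ha))).2 hf)
  exact ⟨_, hd, hfac, fun ζ hζ =>
    norm_le_of_norm_blaschkeFactor_mul_le hd ha (fun ξ hξ => hfac ξ hξ ▸ hB ξ hξ) hζ⟩

end Division

theorem norm_le_of_norm_le_at_separated_points {δ r : ℝ} (hδ : 0 < δ) (hr₀ : 0 ≤ r)
    (hr₁ : r ≤ 1) {z : ℂ} (hz : z ∈ ball (0 : ℂ) 1) {l : List ℂ}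
    (hl : ∀ p ∈ l, p ∈ ball (0 : ℂ) 1) (hsep : l.Pairwise fun p q => δ ≤ ‖blaschkeFactor p q‖)
    (hlz : ∀ p ∈ l, ‖blaschkeFactor p z‖ ≤ r) {f : ℂ → ℂ} {B ε : ℝ}
    (hf : DifferentiableOn ℂ f (ball 0 1)) (hB : ∀ ζ ∈ ball (0 : ℂ) 1, ‖f ζ‖ ≤ B) (hε : 0 ≤ ε)
    (hfl : ∀ p ∈ l, ‖f p‖ ≤ ε) :
    ‖f z‖ ≤ (2 + 2 / δ) ^ l.length * ε + r ^ l.length * B := by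
  induction l generalizing f B ε with
  | nil => simpa using (hB z hz).trans (le_add_of_nonneg_left hε)
  | cons p l ih =>
    simp only [List.mem_cons, forall_eq_or_imp] at hl hlz hfl
    rw [List.pairwise_cons] at hsep
    obtain ⟨h, hh, hfh, hhB⟩ := exists_eq_blaschkeFactor_mul (hf.sub_const (f p))
      (fun ζ hζ => (norm_sub_le _ _).trans (add_le_add (hB ζ hζ) hfl.1)) hl.1 (sub_self _)
    have hhl : ∀ q ∈ l, ‖h q‖ ≤ 2 * ε / δ := by
      intro q hq
      rw [le_div_iff₀ hδ]
      calc ‖h q‖ * δ ≤ ‖h q‖ * ‖blaschkeFactor p q‖ := by gcongr; exact hsep.1 q hq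
        _ = ‖f q - f p‖ := by rw [hfh q (hl.2 q hq), norm_mul, mul_comm]
        _ ≤ ‖f q‖ + ‖f p‖ := norm_sub_le _ _
        _ ≤ 2 * ε := by linarith [hfl.1, hfl.2 q hq]
    have hhz := ih hl.2 hsep.2 hlz.2 hh hhB (by positivity) hhl
    set C := (2 + 2 / δ) ^ l.length
    have hC : 1 ≤ C := one_le_pow₀ (by linarith [div_nonneg zero_le_two hδ.le])
    calc ‖f z‖ = ‖f p + blaschkeFactor p z * h z‖ := by rw [← hfh z hz, add_sub_cancel]
      _ ≤ ε + r * (C * (2 * ε / δ) + r ^ l.length * (B + ε)) := by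
        refine (norm_add_le _ _).trans (add_le_add hfl.1 ?_)
        rw [norm_mul]
        exact mul_le_mul hlz.1 hhz (norm_nonneg _) hr₀
      _ = ε + r * (C * (2 * ε / δ)) + r ^ (l.length + 1) * ε + r ^ (l.length + 1) * B := by
        ring
      _ ≤ C * ε + C * (2 * ε / δ) + C * ε + r ^ (l.length + 1) * B := by
        have h₁ : ε ≤ C * ε := le_mul_of_one_le_left hε hC
        have h₂ : r * (C * (2 * ε / δ)) ≤ C * (2 * ε / δ) :=
          mul_le_of_le_one_left (by positivity) hr₁
        have h₃ : r ^ (l.length + 1) * ε ≤ ε := mul_le_of_le_one_left hε (pow_le_one₀ hr₀ hr₁)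
        linarith
      _ = (2 + 2 / δ) ^ (p :: l).length * ε + r ^ (p :: l).length * B := by
        rw [List.length_cons, pow_succ']
        ring

section UnitCircle

variable {w a z : ℂ}

lemma norm_one_sub_conj_mul_le (hw : ‖w‖ = 1) (ha : ‖a‖ ≤ 1) (z : ℂ) :
    ‖1 - conj a * z‖ ≤ ‖a - w‖ + ‖z - w‖ := by
  have hww : conj w * w = 1 := by rw [Complex.conj_mul', hw]; simp
  calc ‖1 - conj a * z‖ = ‖conj (w - a) * w + conj a * (w - z)‖ := by
        rw [map_sub]; congr 1; linear_combination -hww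
    _ ≤ ‖a - w‖ + ‖z - w‖ := by
        refine (norm_add_le _ _).trans (add_le_add ?_ ?_)
        · rw [norm_mul, Complex.norm_conj, hw, mul_one, norm_sub_rev]
        · rw [norm_mul, Complex.norm_conj, norm_sub_rev]
          exact mul_le_of_le_one_left (norm_nonneg _) ha

lemma one_sub_norm_le_norm_sub (hw : ‖w‖ = 1) (z : ℂ) : 1 - ‖z‖ ≤ ‖z - w‖ := by
  simpa [hw, norm_sub_rev] using norm_sub_norm_le w z

lemma one_lt_of_mem_stolzAngle {α : ℝ} (hw : ‖w‖ = 1) (hz : z ∈ stolzAngle w α) : 1 < α := by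
  obtain ⟨hz₁, hzS⟩ := hz
  rw [mem_ball_zero_iff] at hz₁
  have hs := one_sub_norm_le_norm_sub hw z
  by_contra! hα
  nlinarith

lemma abs_sub_div_le_norm_blaschkeFactor (hw : ‖w‖ = 1) (ha : ‖a‖ < 1) (hz : ‖z‖ ≤ 1) :
    |‖z - w‖ - ‖a - w‖| / (‖a - w‖ + ‖z - w‖) ≤ ‖blaschkeFactor a z‖ := by
  rw [blaschkeFactor, norm_div]
  refine div_le_div₀ (norm_nonneg _) ?_ (norm_one_sub_conj_mul_pos ha hz)
    (norm_one_sub_conj_mul_le hw ha.le z)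
  simpa using abs_norm_sub_norm_le (z - w) (a - w)

lemma norm_blaschkeFactor_le_of_mem_stolzAngle {α α₀ : ℝ} (hw : ‖w‖ = 1)
    (ha : a ∈ stolzAngle w α₀) (hz : z ∈ stolzAngle w α) (h₁ : ‖z - w‖ ≤ ‖a - w‖)
    (h₂ : ‖a - w‖ ≤ 2 * ‖z - w‖) : ‖blaschkeFactor a z‖ ≤ 1 - 1 / (18 * α * α₀) := by
  have hα : 0 < α := one_pos.trans (one_lt_of_mem_stolzAngle hw hz)
  have hα₀ : 0 < α₀ := one_pos.trans (one_lt_of_mem_stolzAngle hw ha)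
  obtain ⟨ha₁, haS⟩ := ha
  obtain ⟨hz₁, hzS⟩ := hz
  rw [mem_ball_zero_iff] at ha₁ hz₁
  set s := ‖z - w‖
  have hD := norm_one_sub_conj_mul_le hw ha₁.le z
  have hDpos := norm_one_sub_conj_mul_pos ha₁ hz₁.le
  have hsq : ‖blaschkeFactor a z‖ ^ 2 ≤ 1 - 1 / (9 * α * α₀) := by
    suffices 1 / (9 * α * α₀) ≤ 1 - ‖blaschkeFactor a z‖ ^ 2 by linarith
    rw [one_sub_norm_blaschkeFactor_sq ha₁ hz₁.le, div_le_div_iff₀ (by positivity) (by positivity)]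
    have hprod : s * s ≤ α₀ * (1 - ‖a‖) * (α * (1 - ‖z‖)) :=
      mul_le_mul (h₁.trans haS.le) hzS.le (norm_nonneg _) (by nlinarith)
    calc 1 * ‖1 - conj a * z‖ ^ 2 ≤ (3 * s) ^ 2 := by nlinarith
      _ ≤ 9 * (α₀ * (1 - ‖a‖) * (α * (1 - ‖z‖))) := by nlinarith
      _ ≤ (1 - ‖a‖ ^ 2) * (1 - ‖z‖ ^ 2) * (9 * α * α₀) := by
        have : (1 - ‖a‖) * (1 - ‖z‖) ≤ (1 - ‖a‖ ^ 2) * (1 - ‖z‖ ^ 2) := by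
          gcongr <;> nlinarith [norm_nonneg a, norm_nonneg z]
        nlinarith [mul_pos hα hα₀]
  have hq : 1 / (18 * α * α₀) = 1 / (9 * α * α₀) / 2 := by field_simp; ring
  nlinarith [sq_nonneg (‖blaschkeFactor a z‖ - 1)]

end UnitCircle

lemma exists_norm_sub_eq_of_tendsto {E : Type*} [SeminormedAddCommGroup E] {γ : ℝ → E} {w : E}
    {t₀ b ρ : ℝ} (hγ : ContinuousOn γ (Ico t₀ b)) (hlim : Tendsto γ (𝓝[<] b) (𝓝 w))
    (ht₀ : t₀ < b) (hρ : 0 < ρ) (hρt₀ : ρ ≤ ‖γ t₀ - w‖) : ∃ t ∈ Ico t₀ b, ‖γ t - w‖ = ρ := by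
  have hclose : ∀ᶠ t in 𝓝[<] b, ‖γ t - w‖ < ρ :=
    (tendsto_iff_norm_sub_tendsto_zero.1 hlim).eventually_lt_const hρ
  obtain ⟨t₁, ht₁ρ, ht₁⟩ := (hclose.and (Ioo_mem_nhdsLT ht₀)).exists
  have hcont : ContinuousOn (fun t => ‖γ t - w‖) (Icc t₀ t₁) :=
    ((hγ.mono (Icc_subset_Ico_right ht₁.2)).sub continuousOn_const).norm
  obtain ⟨t, ht, hρt⟩ := intermediate_value_Icc' ht₁.1.le hcont ⟨ht₁ρ.le, hρt₀⟩
  exact ⟨t, ⟨ht.1, ht.2.trans_lt ht₁.2⟩, hρt⟩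

lemma inv_le_norm_blaschkeFactor_of_levels {w a b : ℂ} (hw : ‖w‖ = 1) (ha : ‖a‖ < 1)
    (hb : ‖b‖ ≤ 1) {s : ℝ} (hs : 0 < s) {j k N : ℕ} (hjk : j < k) (hkN : k ≤ N)
    (ha' : ‖a - w‖ = s * (1 + j / N)) (hb' : ‖b - w‖ = s * (1 + k / N)) :
    (4 * N : ℝ)⁻¹ ≤ ‖blaschkeFactor a b‖ := by
  have hN : (0 : ℝ) < N := by exact_mod_cast (j.zero_le.trans_lt hjk).trans_le hkN
  have hjk' : (j : ℝ) + 1 ≤ k := by exact_mod_cast hjk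
  have hjN : (j : ℝ) / N ≤ 1 := div_le_one_of_le₀ (by exact_mod_cast (hjk.trans_le hkN).le) hN.le
  have hkN' : (k : ℝ) / N ≤ 1 := div_le_one_of_le₀ (by exact_mod_cast hkN) hN.le
  have hnum : s / N ≤ |‖b - w‖ - ‖a - w‖| := by
    rw [ha', hb', show s * (1 + k / N) - s * (1 + j / N) = s * (k - j) / N by ring]
    refine le_abs.2 (Or.inl ?_)
    gcongr
    nlinarith
  have hden : ‖a - w‖ + ‖b - w‖ ≤ 4 * s := by rw [ha', hb']; nlinarith
  calc (4 * N : ℝ)⁻¹ = s / N / (4 * s) := by field_simp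
    _ ≤ |‖b - w‖ - ‖a - w‖| / (‖a - w‖ + ‖b - w‖) :=
      div_le_div₀ (abs_nonneg _) hnum (by rw [ha']; positivity) hden
    _ ≤ ‖blaschkeFactor a b‖ := abs_sub_div_le_norm_blaschkeFactor hw ha hb

theorem norm_le_of_curve_in_stolzAngle {f : ℂ → ℂ} {γ : ℝ → ℂ} {w z : ℂ} {B η α α₀ t₀ : ℝ}
    {N : ℕ} (hf : DifferentiableOn ℂ f (ball 0 1)) (hB : ∀ ζ ∈ ball (0 : ℂ) 1, ‖f ζ‖ ≤ B)
    (hw : ‖w‖ = 1) (hγ : ContinuousOn γ (Ico t₀ 1)) (hlim : Tendsto γ (𝓝[<] 1) (𝓝 w))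
    (ht₀ : t₀ < 1) (hγS : ∀ t ∈ Ico t₀ 1, γ t ∈ stolzAngle w α₀)
    (hfγ : ∀ t ∈ Ico t₀ 1, ‖f (γ t)‖ ≤ η) (hN : 0 < N) (hz : z ∈ stolzAngle w α)
    (hzw : 2 * ‖z - w‖ ≤ ‖γ t₀ - w‖) :
    ‖f z‖ ≤ (2 + 8 * N) ^ N * η + (1 - 1 / (18 * α * α₀)) ^ N * B := by
  have hη : 0 ≤ η := (norm_nonneg _).trans (hfγ t₀ ⟨le_rfl, ht₀⟩)
  have hz₁ : ‖z‖ < 1 := mem_ball_zero_iff.1 hz.1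
  set s := ‖z - w‖
  have hs : 0 < s := (sub_pos.2 hz₁).trans_le (one_sub_norm_le_norm_sub hw z)
  have hlevel : ∀ k ≤ N, s ≤ s * (1 + k / N) ∧ s * (1 + k / N) ≤ 2 * s := by
    intro k hk
    have : (k : ℝ) / N ≤ 1 := div_le_one_of_le₀ (by exact_mod_cast hk) (Nat.cast_nonneg N)
    constructor <;> nlinarith [(by positivity : (0 : ℝ) ≤ k / N)]
  have hpoints : ∀ k < N, ∃ t ∈ Ico t₀ 1, ‖γ t - w‖ = s * (1 + k / N) := fun k hk =>
    exists_norm_sub_eq_of_tendsto hγ hlim ht₀ (hs.trans_le (hlevel k hk.le).1)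
      (hzw.trans' (hlevel k hk.le).2)
  choose! t ht htw using hpoints
  have hmem : ∀ p ∈ (List.range N).map (γ ∘ t), ∃ k < N, p = γ (t k) := by
    simp only [List.mem_map, List.mem_range, Function.comp_apply]
    exact fun p ⟨k, hk, hp⟩ => ⟨k, hk, hp.symm⟩
  have hsep : ((List.range N).map (γ ∘ t)).Pairwise
      fun p q => (4 * N : ℝ)⁻¹ ≤ ‖blaschkeFactor p q‖ := by
    refine List.pairwise_map.2 (List.pairwise_lt_range.imp_of_mem fun hj hk hjk => ?_)
    rw [List.mem_range] at hj hk
    exact inv_le_norm_blaschkeFactor_of_levels hw (mem_ball_zero_iff.1 (hγS _ (ht _ hj)).1)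
      (mem_ball_zero_iff.1 (hγS _ (ht _ hk)).1).le hs hjk hk.le (htw _ hj) (htw _ hk)
  have hα := one_lt_of_mem_stolzAngle hw hz
  have hα₀ := one_lt_of_mem_stolzAngle hw (hγS t₀ ⟨le_rfl, ht₀⟩)
  have hr : 0 ≤ 1 - 1 / (18 * α * α₀) := by
    rw [sub_nonneg, div_le_one (by positivity)]
    nlinarith
  have := norm_le_of_norm_le_at_separated_points (by positivity) hr
    (sub_le_self _ (by positivity)) hz.1 ?_ hsep ?_ hf hB hη ?_
  · have hC : 2 + 2 / (4 * N : ℝ)⁻¹ = 2 + 8 * N := by rw [div_inv_eq_mul]; ring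
    rwa [List.length_map, List.length_range, hC] at this
  all_goals intro p hp; obtain ⟨k, hk, rfl⟩ := hmem p hp
  · exact (hγS _ (ht k hk)).1
  · refine norm_blaschkeFactor_le_of_mem_stolzAngle hw (hγS _ (ht k hk)) hz ?_ ?_ <;>
      rw [htw k hk]
    exacts [(hlevel k hk.le).1, (hlevel k hk.le).2]
  · exact hfγ _ (ht k hk)

theorem tendsto_nhdsWithin_stolzAngle_of_tendsto_comp {f : ℂ → ℂ} {γ : ℝ → ℂ} {w : ℂ}
    {B α α₀ : ℝ} (hf : DifferentiableOn ℂ f (ball 0 1)) (hB : ∀ ζ ∈ ball (0 : ℂ) 1, ‖f ζ‖ ≤ B)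
    (hw : ‖w‖ = 1) (hα : 1 < α) (hα₀ : 1 < α₀) (hγ : ContinuousOn γ (Ico 0 1))
    (hlim : Tendsto γ (𝓝[<] 1) (𝓝 w)) (hγS : ∀ᶠ t in 𝓝[<] 1, γ t ∈ stolzAngle w α₀)
    (hfγ : Tendsto (f ∘ γ) (𝓝[<] 1) (𝓝 0)) : Tendsto f (𝓝[stolzAngle w α] w) (𝓝 0) := by
  rw [Metric.tendsto_nhdsWithin_nhds]
  intro ε hε
  set r := 1 - 1 / (18 * α * α₀)
  have hr₀ : 0 ≤ r := by rw [sub_nonneg, div_le_one (by positivity)]; nlinarith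
  have hr₁ : r < 1 := sub_lt_self _ (by positivity)
  obtain ⟨N, hN, hrN⟩ : ∃ N : ℕ, 0 < N ∧ r ^ N * B < ε / 2 :=
    ((eventually_gt_atTop 0).and <| ((tendsto_pow_atTop_nhds_zero_of_lt_one hr₀ hr₁).mul_const
      B).eventually (gt_mem_nhds (by simpa using half_pos hε))).exists
  set η := ε / (2 * (2 + 8 * N) ^ N)
  obtain ⟨t₀, ht₀, hcurve⟩ : ∃ t₀ ∈ Iio (1 : ℝ), Ico t₀ 1 ⊆
      {t | t ∈ Ico 0 1 ∧ γ t ∈ stolzAngle w α₀ ∧ ‖f (γ t)‖ ≤ η} := by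
    refine mem_nhdsLT_iff_exists_Ico_subset.1 ?_
    filter_upwards [Ioo_mem_nhdsLT zero_lt_one, hγS,
      hfγ.eventually (closedBall_mem_nhds 0 (show 0 < η by positivity))] with t ht hS hη
    exact ⟨Ioo_subset_Ico_self ht, hS, by simpa using hη⟩
  obtain ⟨hγt₀, hγS₀, -⟩ := hcurve ⟨le_rfl, ht₀⟩
  refine ⟨‖γ t₀ - w‖ / 2, half_pos <| (sub_pos.2 (mem_ball_zero_iff.1 hγS₀.1)).trans_le
    (one_sub_norm_le_norm_sub hw _), fun z hz hzw => ?_⟩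
  rw [dist_eq_norm] at hzw
  rw [dist_zero_right]
  calc ‖f z‖ ≤ (2 + 8 * N) ^ N * η + r ^ N * B :=
        norm_le_of_curve_in_stolzAngle hf hB hw (hγ.mono (Ico_subset_Ico_left hγt₀.1)) hlim ht₀
          (fun t ht => (hcurve ht).2.1) (fun t ht => (hcurve ht).2.2) hN hz (by linarith)
    _ < ε / 2 + ε / 2 := by
        have : (2 + 8 * N : ℝ) ^ N * η = ε / 2 := by simp only [η]; field_simp
        linarith
    _ = ε := add_halves ε

/-- Lindelöf's theorem: let `g` be a bounded holomorphic function on the unit disc, and let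
`γ : [0,1) → 𝔻` be a continuous curve tending to the boundary point `e^{iθ}` which eventually
lies in some Stolz angle at `e^{iθ}`. If `g ∘ γ` tends to `L`, then `g` has non-tangential
limit `L` at `e^{iθ}`, i.e. `g → L` along every Stolz angle at `e^{iθ}`. -/
theorem stmt6 (g : ℂ → ℂ) (M : ℝ) (γ : ℝ → ℂ) (θ : ℝ) (L : ℂ) (α₀ : ℝ) (hα₀ : 1 < α₀)
    (hg : DifferentiableOn ℂ g (ball (0 : ℂ) 1))
    (hbd : ∀ z ∈ ball (0 : ℂ) 1, ‖g z‖ ≤ M)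
    (hγcont : ContinuousOn γ (Set.Ico (0 : ℝ) 1))
    (hγmem : ∀ t ∈ Set.Ico (0 : ℝ) 1, γ t ∈ ball (0 : ℂ) 1)
    (hγlim : Tendsto γ (nhdsWithin 1 (Set.Iio 1)) (nhds (Complex.exp (θ * Complex.I))))
    (hγstolz : ∀ᶠ t in nhdsWithin 1 (Set.Iio 1),
      ‖γ t - Complex.exp (θ * Complex.I)‖ < α₀ * (1 - ‖γ t‖))
    (hgγ : Tendsto (g ∘ γ) (nhdsWithin 1 (Set.Iio 1)) (nhds L)) :
    ∀ α > 1, Tendsto g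
      (nhdsWithin (Complex.exp (θ * Complex.I))
        {ζ : ℂ | ζ ∈ ball (0 : ℂ) 1 ∧
          ‖ζ - Complex.exp (θ * Complex.I)‖ < α * (1 - ‖ζ‖)})
      (nhds L) := by
  intro α hα
  have hL : ‖L‖ ≤ M := le_of_tendsto hgγ.norm <| by
    filter_upwards [Ioo_mem_nhdsLT zero_lt_one] with t ht
    exact hbd _ (hγmem t (Ioo_subset_Ico_self ht))
  have hγS : ∀ᶠ t in 𝓝[<] 1, γ t ∈ stolzAngle (Complex.exp (θ * Complex.I)) α₀ := by
    filter_upwards [Ioo_mem_nhdsLT zero_lt_one, hγstolz] with t ht hS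
    exact ⟨hγmem t (Ioo_subset_Ico_self ht), hS⟩
  exact tendsto_sub_nhds_zero_iff.1 <| tendsto_nhdsWithin_stolzAngle_of_tendsto_comp
    (hg.sub_const L) (B := 2 * M) (fun ζ hζ => (norm_sub_le _ _).trans (by linarith [hbd ζ hζ]))
    (norm_exp_ofReal_mul_I θ) hα hα₀ hγcont hγlim hγS (tendsto_sub_nhds_zero_iff.2 hgγ)
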